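/- arXiv:1407.3971 — 2 statements merged into one kernel-verified Lean document; each statement's English description precedes it below -/
import Mathlib

section
/- Lower bound on the log-likelihood ratio for the random-effects likelihood: for all u ∈ ℝ, v > 0, μ₀, μ ∈ ℝ and ω₀², ω² > 0, writing θ₀ = (μ₀, ω₀²) and θ = (μ, ω²), one has log f(u, v | θ₀) − log f(u, v | θ) ≥ −(1/2)·{ log(1 + ω²/ω₀²) + |ω² − ω₀²|/ω² } − (1/2)·|ω₀² − ω²|·( u/(1 + ω₀²v) )²·(1 + ω₀²/ω²) − |μ|·|u/(1 + ω₀²v)|·(1 + |ω₀² − ω²|/ω²) − μ₀²v/(2(1 + ω₀²v)) − |μ₀ u/(1 + ω₀²v)|. -/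
/-- The random-effects likelihood
`f(u, v | θ) = (1 + ω²v)^(−1/2) · exp(−(v/(2(1 + ω²v)))·(μ − u/v)²) · exp(u²/(2v))`
for `θ = (μ, ω²)`. -/
noncomputable def randomEffectsLik (u v μ ωsq : ℝ) : ℝ :=
  (1 + ωsq * v) ^ (-(1 : ℝ) / 2) *
    Real.exp (-(v / (2 * (1 + ωsq * v))) * (μ - u / v) ^ 2) *
    Real.exp (u ^ 2 / (2 * v))

/-! Expanding the square, the factor `exp (u² / (2v))` cancels the `u² / v` term and the
log-likelihood becomes a combination of `μ²`, `μ u` and `u²` over `1 + ω²v`. Every term of the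
log-likelihood ratio is then bounded by comparing `1 + ω₀²v` with `1 + ω²v`: their ratio is at
most `1 + |ω₀² − ω²| / ω²` and at most `1 + ω₀² / ω²`, and `log` of the ratio is at most the
ratio minus one. -/

theorem log_randomEffectsLik (u μ : ℝ) {v ωsq : ℝ} (hv : v ≠ 0) (hA : 0 < 1 + ωsq * v) :
    Real.log (randomEffectsLik u v μ ωsq) =
      -(1 / 2) * Real.log (1 + ωsq * v) - μ ^ 2 * v / (2 * (1 + ωsq * v))
        + μ * u / (1 + ωsq * v) + u ^ 2 / 2 * (ωsq / (1 + ωsq * v)) := by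
  unfold randomEffectsLik
  rw [Real.log_mul (by positivity) (Real.exp_ne_zero _),
    Real.log_mul (by positivity) (Real.exp_ne_zero _), Real.log_rpow hA, Real.log_exp,
    Real.log_exp]
  field_simp
  ring

theorem div_one_add_mul_sub_div_one_add_mul {a b v : ℝ} (ha : 1 + a * v ≠ 0)
    (hb : 1 + b * v ≠ 0) :
    a / (1 + a * v) - b / (1 + b * v) = (a - b) / ((1 + a * v) * (1 + b * v)) := by
  rw [div_sub_div _ _ ha hb]
  ring

theorem one_add_mul_div_one_add_mul_le_one_add_abs_sub_div {a b v : ℝ} (hb : 0 < b)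
    (hv : 0 ≤ v) : (1 + a * v) / (1 + b * v) ≤ 1 + |a - b| / b := by
  rw [div_le_iff₀ (by positivity)]
  have hexpand : (1 + |a - b| / b) * (1 + b * v) = 1 + b * v + |a - b| / b + |a - b| * v := by
    field_simp
    ring
  have hdiff : (a - b) * v ≤ |a - b| * v := mul_le_mul_of_nonneg_right (le_abs_self _) hv
  have : 0 ≤ |a - b| / b := by positivity
  linarith

theorem one_add_mul_div_one_add_mul_le_one_add_div {a b v : ℝ} (ha : 0 ≤ a) (hb : 0 < b)
    (hv : 0 ≤ v) : (1 + a * v) / (1 + b * v) ≤ 1 + a / b := by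
  rw [div_le_iff₀ (by positivity)]
  have hexpand : (1 + a / b) * (1 + b * v) = 1 + a * v + (a / b + b * v) := by
    field_simp
    ring
  rw [hexpand]
  linarith [show 0 ≤ a / b + b * v by positivity]

theorem mul_div_le_abs_mul_abs_div_mul {x y A₀ A c : ℝ} (hA₀ : 0 < A₀) (hA : 0 < A)
    (hc : A₀ / A ≤ c) : x * y / A ≤ |x| * |y / A₀| * c :=
  calc x * y / A ≤ |x * y| / A := by gcongr; exact le_abs_self _
    _ = |x| * |y / A₀| * (A₀ / A) := by
        rw [abs_mul, abs_div, abs_of_pos hA₀]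
        field_simp
    _ ≤ |x| * |y / A₀| * c := by gcongr

theorem neg_abs_mul_sq_div_mul_le {u δ A₀ A c : ℝ} (hA₀ : 0 < A₀) (hA : 0 < A)
    (hc : A₀ / A ≤ c) : -(1 / 2) * |δ| * (u / A₀) ^ 2 * c ≤ u ^ 2 / 2 * (δ / (A₀ * A)) :=
  calc -(1 / 2) * |δ| * (u / A₀) ^ 2 * c ≤ -(1 / 2 * |δ| * (u / A₀) ^ 2 * (A₀ / A)) := by
        rw [neg_mul, neg_mul, neg_mul, neg_le_neg_iff]
        gcongr
    _ = u ^ 2 / 2 * (-|δ| / (A₀ * A)) := by field_simp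
    _ ≤ u ^ 2 / 2 * (δ / (A₀ * A)) := by gcongr; exact neg_abs_le δ

/-- Lower bound on the log-likelihood ratio for the random-effects likelihood. -/
theorem stmt4 (u v μ₀ μ ω₀sq ωsq : ℝ) (hv : 0 < v) (hω₀ : 0 < ω₀sq) (hω : 0 < ωsq) :
    Real.log (randomEffectsLik u v μ₀ ω₀sq) - Real.log (randomEffectsLik u v μ ωsq) ≥
      -(1 / 2) * (Real.log (1 + ωsq / ω₀sq) + |ωsq - ω₀sq| / ωsq)
        - (1 / 2) * |ω₀sq - ωsq| * (u / (1 + ω₀sq * v)) ^ 2 * (1 + ω₀sq / ωsq)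
        - |μ| * |u / (1 + ω₀sq * v)| * (1 + |ω₀sq - ωsq| / ωsq)
        - μ₀ ^ 2 * v / (2 * (1 + ω₀sq * v))
        - |μ₀ * u / (1 + ω₀sq * v)| := by
  have hA₀ : 0 < 1 + ω₀sq * v := by positivity
  have hA : 0 < 1 + ωsq * v := by positivity
  have hratio_abs_sub :=
    one_add_mul_div_one_add_mul_le_one_add_abs_sub_div (a := ω₀sq) hω hv.le
  have hratio_div := one_add_mul_div_one_add_mul_le_one_add_div hω₀.le hω hv.le
  have hdiff := div_one_add_mul_sub_div_one_add_mul hA₀.ne' hA.ne'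
  rw [log_randomEffectsLik u μ₀ hv.ne' hA₀, log_randomEffectsLik u μ hv.ne' hA,
    abs_sub_comm ωsq ω₀sq]
  generalize 1 + ω₀sq * v = A₀ at *
  generalize 1 + ωsq * v = A at *
  have hlog : Real.log A₀ - Real.log A ≤ |ω₀sq - ωsq| / ωsq := by
    rw [← Real.log_div hA₀.ne' hA.ne']
    linarith [Real.log_le_sub_one_of_pos (div_pos hA₀ hA)]
  have hquadratic : -(1 / 2) * |ω₀sq - ωsq| * (u / A₀) ^ 2 * (1 + ω₀sq / ωsq)
      ≤ u ^ 2 / 2 * (ω₀sq / A₀) - u ^ 2 / 2 * (ωsq / A) := by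
    rw [← mul_sub, hdiff]
    exact neg_abs_mul_sq_div_mul_le hA₀ hA hratio_div
  have hlinear := mul_div_le_abs_mul_abs_div_mul (x := μ) (y := u) hA₀ hA hratio_abs_sub
  have : 0 ≤ Real.log (1 + ωsq / ω₀sq) := Real.log_nonneg (by linarith [div_pos hω hω₀])
  have : 0 ≤ μ ^ 2 * v / (2 * A) := by positivity
  linarith [neg_abs_le (μ₀ * u / A₀)]
end

section
/- Summability of deviation probabilities in the iid case of the explicit SDE random-effects example: Let T > 0, μ₀ ∈ ℝ, A ∈ ℝ, B > 0, and set T_i = T for all i ≥ 1. Let U₁, U₂, … be iid real random variables with common law N(μ₀T, T(1 + T)) on an infinite product probability space with law P. Then for every ε > 0, ∑_{n=1}^∞ P( |μ̂_n − μ₀| > ε ) < ∞. -/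
/-!
Centring, `X i = U i - μ₀ T` are independent `N(0, T (1 + T))`, hence sub-Gaussian with
parameter `T (1 + T)`. Clearing denominators,
`μ̂_n - μ₀ = (∑_{i<n} X i + C) / (T n + D)` with constants `C` and `D > 0`, so a deviation
beyond `ε` forces `|∑_{i<n} X i| ≥ ε T n - const`. A Chernoff bound at one fixed `t > 0`
bounds the probability of that by a constant times `r ^ n` with `r < 1`.
-/

open MeasureTheory ProbabilityTheory Filter

/-- The posterior mean `μ̂_n` in the explicit SDE random-effects example. -/
noncomputable def muHat (n : ℕ) (U T : ℕ → ℝ) (A B : ℝ) : ℝ :=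
  ((∑ i ∈ Finset.range n, U i / (1 + T i)) + A / B ^ 2) /
    ((∑ i ∈ Finset.range n, T i / (1 + T i)) + 1 / B ^ 2)

open Real Finset
open scoped NNReal

namespace ProbabilityTheory

variable {Ω : Type*} {mΩ : MeasurableSpace Ω} {μ : Measure Ω}

lemma hasSubgaussianMGF_id_gaussianReal_zero (v : ℝ≥0) :
    HasSubgaussianMGF id v (gaussianReal 0 v) where
  integrable_exp_mul := integrable_exp_mul_gaussianReal
  mgf_le t := by simp [mgf_id_gaussianReal]

lemma HasLaw.hasSubgaussianMGF_sub_of_gaussianReal {X : Ω → ℝ} {m : ℝ} {v : ℝ≥0}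
    (hX : HasLaw X (gaussianReal m v) μ) : HasSubgaussianMGF (fun ω ↦ X ω - m) v μ := by
  have hcentered := gaussianReal_sub_const hX m
  rw [sub_self] at hcentered
  rw [← HasSubgaussianMGF.id_map_iff hcentered.aemeasurable, hcentered.map_eq]
  exact hasSubgaussianMGF_id_gaussianReal_zero v

namespace HasSubgaussianMGF

variable {X : Ω → ℝ} {c : ℝ≥0}

lemma measureReal_ge_le_exp_add (h : HasSubgaussianMGF X c μ) (ε : ℝ) {t : ℝ} (ht : 0 ≤ t) :
    μ.real {ω | ε ≤ X ω} ≤ exp (-t * ε + c * t ^ 2 / 2) := by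
  have hkernel := (HasSubgaussianMGF_iff_kernel.1 h).measure_ge_le_exp_add ε
  simp only [ae_dirac_eq, Filter.eventually_pure, Kernel.const_apply] at hkernel
  exact hkernel t ht

end HasSubgaussianMGF

section SumRange

variable {X : ℕ → Ω → ℝ} {c : ℝ≥0}

theorem summable_measureReal_le_sum_range (hindep : iIndepFun X μ)
    (hX : ∀ i, HasSubgaussianMGF (X i) c μ) {δ : ℝ} (hδ : 0 < δ) (K : ℝ) :
    Summable fun n : ℕ ↦ μ.real {ω | δ * n + K ≤ ∑ i ∈ range n, X i ω} := by
  -- Any such `t` makes the Chernoff exponent decrease linearly in `n`; the optimal `δ / c` would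
  -- be the junk value `0` when `c = 0`.
  obtain ⟨t, ht, hct⟩ : ∃ t : ℝ, 0 < t ∧ c * t / 2 < δ := by
    refine ⟨δ / (c + 1), by positivity, ?_⟩
    rw [div_lt_iff₀ two_pos, mul_div_assoc', div_lt_iff₀ (by positivity)]
    nlinarith [c.coe_nonneg]
  have hr1 : exp (-(t * (δ - c * t / 2))) < 1 := exp_lt_one_iff.2 (by nlinarith)
  refine Summable.of_nonneg_of_le (fun _ ↦ measureReal_nonneg) (fun n ↦ ?_)
    ((summable_geometric_of_lt_one (exp_pos _).le hr1).mul_left (exp (-t * K)))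
  have hsum := HasSubgaussianMGF.sum_of_iIndepFun hindep (s := range n) (fun i _ ↦ hX i)
  refine (hsum.measureReal_ge_le_exp_add _ ht.le).trans_eq ?_
  rw [← exp_nat_mul, ← exp_add]
  simp only [sum_const, card_range, nsmul_eq_mul]
  push_cast
  ring_nf

theorem summable_measureReal_le_abs_sum_range (hindep : iIndepFun X μ)
    (hX : ∀ i, HasSubgaussianMGF (X i) c μ) {δ : ℝ} (hδ : 0 < δ) (K : ℝ) :
    Summable fun n : ℕ ↦ μ.real {ω | δ * n + K ≤ |∑ i ∈ range n, X i ω|} := by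
  have hneg : Summable fun n : ℕ ↦ μ.real {ω | δ * n + K ≤ ∑ i ∈ range n, (-X i) ω} :=
    summable_measureReal_le_sum_range (hindep.comp (fun _ x ↦ -x) (fun _ ↦ measurable_neg))
      (fun i ↦ (hX i).neg) hδ K
  have : IsProbabilityMeasure μ := hindep.isProbabilityMeasure
  refine Summable.of_nonneg_of_le (fun _ ↦ measureReal_nonneg) (fun n ↦ ?_)
    ((summable_measureReal_le_sum_range hindep hX hδ K).add hneg)
  refine (measureReal_mono (fun ω hω ↦ ?_)).trans (measureReal_union_le _ _)
  simp only [Set.mem_ofPred_eq, Set.mem_union, Pi.neg_apply, sum_neg_distrib] at hω ⊢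
  exact le_abs.1 hω

end SumRange

end ProbabilityTheory

lemma muHat_const_sub_eq (n : ℕ) (U : ℕ → ℝ) {T : ℝ} (hT : 0 ≤ T) (A : ℝ) {B : ℝ} (hB : B ≠ 0)
    (μ₀ : ℝ) :
    muHat n U (fun _ ↦ T) A B - μ₀ =
      (∑ i ∈ range n, (U i - μ₀ * T) + (1 + T) * (A - μ₀) / B ^ 2) /
        (T * n + (1 + T) / B ^ 2) := by
  have hD : 0 < T * n + (1 + T) / B ^ 2 := by positivity
  rw [muHat, ← sum_div, sum_sub_distrib]
  simp only [sum_const, card_range, nsmul_eq_mul]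
  field_simp
  ring

/-- Summability of deviation probabilities in the iid case (`T_i = T`) of the explicit
SDE random-effects example: if `U₁, U₂, …` are iid `N(μ₀ T, T(1 + T))`, then for every
`ε > 0`, `∑_{n=1}^∞ P(|μ̂_n − μ₀| > ε) < ∞`. -/
theorem stmt11 {S : Type*} [MeasurableSpace S] (P : Measure S) [IsProbabilityMeasure P]
    (T μ₀ A B : ℝ) (hT : 0 < T) (hB : 0 < B)
    (U : ℕ → S → ℝ) (hUmeas : ∀ i, Measurable (U i))
    (hUindep : iIndepFun U P)
    (hUdist : ∀ i, Measure.map (U i) P = gaussianReal (μ₀ * T) (T * (1 + T)).toNNReal) :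
    ∀ ε > 0,
      Summable (fun n : ℕ =>
        (P {s | ε < |muHat n (fun i => U i s) (fun _ => T) A B - μ₀|}).toReal) := by
  intro ε hε
  have hX : ∀ i, HasSubgaussianMGF (fun s ↦ U i s - μ₀ * T) (T * (1 + T)).toNNReal P :=
    fun i ↦ HasLaw.hasSubgaussianMGF_sub_of_gaussianReal ⟨(hUmeas i).aemeasurable, hUdist i⟩
  have hindep : iIndepFun (fun i s ↦ U i s - μ₀ * T) P :=
    hUindep.comp (fun _ x ↦ x - μ₀ * T) (fun _ ↦ by fun_prop)
  refine Summable.of_nonneg_of_le (fun _ ↦ ENNReal.toReal_nonneg) (fun n ↦ measureReal_mono ?_)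
    (summable_measureReal_le_abs_sum_range hindep hX (mul_pos hε hT)
      (ε * (1 + T) / B ^ 2 - |(1 + T) * (A - μ₀) / B ^ 2|))
  intro s hs
  simp only [Set.mem_ofPred_eq, muHat_const_sub_eq n _ hT.le A hB.ne' μ₀] at hs ⊢
  have hD : 0 < T * n + (1 + T) / B ^ 2 := by positivity
  rw [abs_div, abs_of_pos hD, lt_div_iff₀ hD] at hs
  have hεD : ε * (T * n + (1 + T) / B ^ 2) = ε * T * n + ε * (1 + T) / B ^ 2 := by ring
  have := abs_add_le (∑ i ∈ range n, (U i s - μ₀ * T)) ((1 + T) * (A - μ₀) / B ^ 2)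
  linarith
end
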